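/- Let J be a model structure on ℂⁿ. A complex one-form ω = Σ_k (c_k dz^k + d_k dz̄^k) is of type (1,0) with respect to J if and only if d_n = 0 and d_k = −(i/2) c_n L̃_{2n−1,k} for every k = 1,…,n−1. Equivalently, the (1,0) forms are exactly ω = Σ_{k=1}^n c_k dz^k − (i/2) c_n Σ_{k=1}^{n−1} L̃_{2n−1,k} dz̄^k with c₁,…,c_n ∈ ℂ. -/
import Mathlib


open Complex BigOperators

/-- The entry `L̃_{2n-1,k}(z,z̄) = Σ_{l ≠ k} (α_l^k z^l + β_l^k conj(z^l))`. -/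
noncomputable def Ltilde (n : ℕ) (α β : Fin n → Fin n → ℂ) (k : Fin n) (z : Fin n → ℂ) : ℂ :=
  ∑ l : Fin n, if l = k ∨ (l : ℕ) + 1 = n then 0
    else (α l k * z l + β l k * (starRingEnd ℂ) (z l))

/-- `(x,y)` are the components of a `(0,1)` vector field of the model structure at `z`:
an eigenvector of the complexified structure for the eigenvalue `-i`. -/
def IsO1 (n : ℕ) (α β : Fin n → Fin n → ℂ) (z : Fin n → ℂ) (x y : Fin n → ℂ) : Prop :=
  (∀ k : Fin n,
      (if (k : ℕ) + 1 = n
        then Complex.I * x k +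
          ∑ j : Fin n, (if (j : ℕ) + 1 = n then 0 else Ltilde n α β j z * y j)
        else Complex.I * x k) = -Complex.I * x k) ∧
    (∀ k : Fin n, -Complex.I * y k = -Complex.I * y k)

/-- a complex one-form `ω = Σ_k (c_k dz^k + d_k dz̄^k)` is of type `(1,0)`
for the model structure `J` (i.e. annihilates all `(0,1)` vectors) iff `d_n = 0` and
`d_k = -(i/2) c_n L̃_{2n-1,k}` for every `k = 1,…,n-1`. -/
theorem stmt3 (n : ℕ) (hn : 1 ≤ n) (α β : Fin n → Fin n → ℂ)
    (z : Fin n → ℂ) (c d : Fin n → ℂ) :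
    (∀ x y : Fin n → ℂ, IsO1 n α β z x y →
        ∑ k : Fin n, (c k * x k + d k * y k) = 0) ↔
      (d ⟨n - 1, by omega⟩ = 0 ∧
        ∀ k : Fin n, (k : ℕ) + 1 < n →
          d k = -(Complex.I / 2) * c ⟨n - 1, by omega⟩ * Ltilde n α β k z) := by
  set N : Fin n := ⟨n - 1, by omega⟩ with hN
  have hNval : ((N : Fin n) : ℕ) + 1 = n := by simp [hN]; omega
  have hlast : ∀ k : Fin n, (k : ℕ) + 1 = n ↔ k = N := by
    intro k
    constructor
    · intro h; apply Fin.ext; simp [hN]; omega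
    · rintro rfl; exact hNval
  have hIne : Complex.I ≠ 0 := Complex.I_ne_zero
  constructor
  · intro h
    constructor
    · have h0 := h 0 (Pi.single N 1) ?_
      · simpa [Pi.single_apply, mul_ite, Finset.sum_ite_eq'] using h0
      · refine ⟨fun k => ?_, fun k => rfl⟩
        have hs : (∑ j : Fin n, (if (j : ℕ) + 1 = n then 0
            else Ltilde n α β j z * (Pi.single N 1 : Fin n → ℂ) j)) = 0 := by
          refine Finset.sum_eq_zero fun j _ => ?_
          by_cases hj : (j : ℕ) + 1 = n
          · simp [hj]
          · have : j ≠ N := fun e => hj ((hlast j).2 e)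
            simp [hj, Pi.single_apply, this]
        by_cases hk : (k : ℕ) + 1 = n <;> simp [hk, hs]
    · intro k hk
      have hkN : k ≠ N := by
        intro e; rw [e, hNval] at hk; omega
      have h0 := h (Pi.single N (Complex.I / 2 * Ltilde n α β k z)) (Pi.single k 1) ?_
      · have := h0
        rw [Finset.sum_congr rfl (fun j _ => by
          rw [Pi.single_apply, Pi.single_apply])] at this
        simp only [mul_ite, mul_one, mul_zero] at this
        rw [Finset.sum_add_distrib, Finset.sum_ite_eq', Finset.sum_ite_eq'] at this
        simp at this
        linear_combination this
      · refine ⟨fun j => ?_, fun _ => rfl⟩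
        by_cases hj : (j : ℕ) + 1 = n
        · have hjN : j = N := (hlast j).1 hj
          subst hjN
          have hs : (∑ j : Fin n, (if (j : ℕ) + 1 = n then 0
              else Ltilde n α β j z * if j = k then (1 : ℂ) else 0)) =
              Ltilde n α β k z := by
            rw [Finset.sum_eq_single k]
            · simp [Nat.ne_of_lt hk]
            · intro b _ hb
              by_cases hb' : (b : ℕ) + 1 = n
              · simp [hb']
              · simp [hb', hb]
            · simp
          simp only [if_pos hj, Pi.single_apply, if_pos rfl, if_true]
          rw [hs]
          linear_combination (Ltilde n α β k z) * Complex.I_sq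
        · have hjN : j ≠ N := fun e => hj ((hlast j).2 e)
          simp [hj, Pi.single_apply, hjN]
  · rintro ⟨hdN, hd⟩ x y ⟨hx, -⟩
    have hxk : ∀ k : Fin n, k ≠ N → x k = 0 := by
      intro k hk
      have := hx k
      rw [if_neg (fun e => hk ((hlast k).1 e))] at this
      have : (2 * Complex.I) * x k = 0 := by linear_combination this
      rcases mul_eq_zero.1 this with h' | h'
      · exact absurd h' (by simp [hIne])
      · exact h'
    have hxN : x N = Complex.I / 2 * ∑ j : Fin n,
        (if (j : ℕ) + 1 = n then 0 else Ltilde n α β j z * y j) := by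
      have := hx N
      rw [if_pos hNval] at this
      linear_combination (-Complex.I/2) * this + x N * Complex.I_sq
    have hsum : ∑ k : Fin n, c k * x k = c N * x N := by
      rw [Finset.sum_eq_single N]
      · intro b _ hb; rw [hxk b hb, mul_zero]
      · intro hmem; exact absurd (Finset.mem_univ N) hmem
    rw [Finset.sum_add_distrib, hsum, hxN, Finset.mul_sum, Finset.mul_sum,
      ← Finset.sum_add_distrib]
    refine Finset.sum_eq_zero fun k _ => ?_
    by_cases hk : (k : ℕ) + 1 = n
    · have : k = N := (hlast k).1 hk
      subst this
      simp [hk, hdN]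
    · have hk' : (k : ℕ) + 1 < n := lt_of_le_of_ne (Nat.succ_le_of_lt k.isLt) hk
      rw [if_neg hk, hd k hk']
      ring
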